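/- Every maximal outerplanar graph O with vertices 1,…,n in clockwise order and positive weights w, and every index i with 1 ≤ i ≤ n, admits a proportional rectangle-contact representation in which the rectangle for vertex 1 is leftmost, the rectangle for vertex n is bottommost among the others, the top-right corners of the rectangles for vertices 1,…,i are exposed, and the bottom-right corners of the rectangles for vertices i,…,n are exposed. -/

import Mathlib

/-!
The rectangles are built by induction over the triangles of the graph. An edge `ab` with
`a + 2 ≤ b` owns a pocket: the rectangle of `a` is a wall on its left and that of `b` a floor below
it. The apex `c` of the triangle on `ab` gets a rectangle in the corner of the pocket, which splits
it into the pockets of `ac` (above the apex) and of `cb` (to its right). While `c` precedes the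
pivot this staircase keeps every top-right corner free. From the pivot on, the pocket of `cb` is
instead turned a quarter clockwise and hung below the apex, right of the rectangle of `b`; the turn
makes the free top-right corners bottom-right ones.

Areas stay exact because a pocket of area more than `∏ (w v + 1)² / w v` over its inner vertices
always has room for the apex and both sub-pockets. The triangles exist because a noncrossing
family of arcs on `0, …, m` has at most `2m - 1` members, so an edge of a maximal outerplanar graph
without apex would leave room for one more chord.
-/

/-- Maximal outerplanar graph on `Fin n` with outer (Hamiltonian) cycle `0,1,...,n-1`:
it contains all cycle edges, its chords are pairwise non-crossing, and it has the
maximal number `2n-3` of edges. -/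
def MaxOuterplanar (n : ℕ) (G : SimpleGraph (Fin n)) : Prop :=
  (∀ i : Fin n, ∀ _ : 1 < n, G.Adj i ⟨((i : ℕ) + 1) % n, Nat.mod_lt _ (by omega)⟩) ∧
  (∀ a b c d : Fin n, G.Adj a b → G.Adj c d → ¬(a < c ∧ c < b ∧ b < d)) ∧
  G.edgeSet.ncard = 2 * n - 3


/-- An axis-aligned rectangle in the plane. -/
structure Rect where
  xlo : ℝ
  xhi : ℝ
  ylo : ℝ
  yhi : ℝ
  hx : xlo < xhi
  hy : ylo < yhi

def Rect.toSet (R : Rect) : Set (ℝ × ℝ) :=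
  {p | R.xlo ≤ p.1 ∧ p.1 ≤ R.xhi ∧ R.ylo ≤ p.2 ∧ p.2 ≤ R.yhi}

def Rect.interior (R : Rect) : Set (ℝ × ℝ) :=
  {p | R.xlo < p.1 ∧ p.1 < R.xhi ∧ R.ylo < p.2 ∧ p.2 < R.yhi}

def Rect.area (R : Rect) : ℝ := (R.xhi - R.xlo) * (R.yhi - R.ylo)

def Rect.IsSquare (R : Rect) : Prop := R.xhi - R.xlo = R.yhi - R.ylo

/-- Two rectangles share a boundary segment of positive length. -/
def Rect.Contact (R S : Rect) : Prop :=
  ((R.xhi = S.xlo ∨ S.xhi = R.xlo) ∧ max R.ylo S.ylo < min R.yhi S.yhi) ∨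
  ((R.yhi = S.ylo ∨ S.yhi = R.ylo) ∧ max R.xlo S.xlo < min R.xhi S.xhi)

namespace Rect

variable {R S : Rect} {p : ℝ × ℝ}

theorem contact_iff : R.Contact S ↔
    (R.xhi = S.xlo ∨ S.xhi = R.xlo) ∧ R.ylo < S.yhi ∧ S.ylo < R.yhi ∨
    (R.yhi = S.ylo ∨ S.yhi = R.ylo) ∧ R.xlo < S.xhi ∧ S.xlo < R.xhi := by
  have := R.hx; have := R.hy; have := S.hx; have := S.hy
  simp only [Contact, max_lt_iff, lt_min_iff]
  grind

theorem contact_comm : R.Contact S ↔ S.Contact R := by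
  simp only [contact_iff]
  grind

theorem disjoint_interior_of_xhi_le (h : R.xhi ≤ S.xlo) : Disjoint R.interior S.interior :=
  Set.disjoint_left.2 fun _ hR hS => by linarith [hR.2.1, hS.1]

theorem disjoint_interior_of_yhi_le (h : R.yhi ≤ S.ylo) : Disjoint R.interior S.interior :=
  Set.disjoint_left.2 fun _ hR hS => by linarith [hR.2.2.2, hS.2.2.1]

theorem not_contact_of_xhi_lt (h : R.xhi < S.xlo) : ¬R.Contact S := by
  have := R.hx; have := S.hx
  rw [contact_iff]
  rintro (⟨h' | h', -⟩ | ⟨-, -, h'⟩) <;> linarith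

theorem not_contact_of_yhi_lt (h : R.yhi < S.ylo) : ¬R.Contact S := by
  have := R.hy; have := S.hy
  rw [contact_iff]
  rintro (⟨-, -, h'⟩ | ⟨h' | h', -⟩) <;> linarith

def ofSize (x y : ℝ) {u h : ℝ} (hu : 0 < u) (hh : 0 < h) : Rect :=
  ⟨x, x + u, y, y + h, lt_add_of_pos_right x hu, lt_add_of_pos_right y hh⟩

section ofSize

variable {x y u h : ℝ} {hu : 0 < u} {hh : 0 < h}

@[simp] theorem ofSize_xlo : (ofSize x y hu hh).xlo = x := rfl
@[simp] theorem ofSize_xhi : (ofSize x y hu hh).xhi = x + u := rfl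
@[simp] theorem ofSize_ylo : (ofSize x y hu hh).ylo = y := rfl
@[simp] theorem ofSize_yhi : (ofSize x y hu hh).yhi = y + h := rfl

theorem area_ofSize : (ofSize x y hu hh).area = u * h := by
  simp only [area, ofSize]; ring

end ofSize

/-- The image of `R` under the clockwise quarter turn `(X, Y) ↦ (Y, -X)`. -/
def rotCW (R : Rect) : Rect :=
  ⟨R.ylo, R.yhi, -R.xhi, -R.xlo, R.hy, neg_lt_neg R.hx⟩

/-- The image of `R` under the counterclockwise quarter turn `(X, Y) ↦ (-Y, X)`. -/
def rotCCW (R : Rect) : Rect :=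
  ⟨-R.yhi, -R.ylo, R.xlo, R.xhi, neg_lt_neg R.hy, R.hx⟩

@[simp] theorem rotCW_xlo : R.rotCW.xlo = R.ylo := rfl
@[simp] theorem rotCW_xhi : R.rotCW.xhi = R.yhi := rfl
@[simp] theorem rotCW_ylo : R.rotCW.ylo = -R.xhi := rfl
@[simp] theorem rotCW_yhi : R.rotCW.yhi = -R.xlo := rfl

@[simp] theorem rotCCW_xlo : R.rotCCW.xlo = -R.yhi := rfl
@[simp] theorem rotCCW_xhi : R.rotCCW.xhi = -R.ylo := rfl
@[simp] theorem rotCCW_ylo : R.rotCCW.ylo = R.xlo := rfl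
@[simp] theorem rotCCW_yhi : R.rotCCW.yhi = R.xhi := rfl

theorem area_rotCW : R.rotCW.area = R.area := by
  simp only [area, rotCW]; ring

theorem mem_toSet_rotCW : p ∈ R.rotCW.toSet ↔ (-p.2, p.1) ∈ R.toSet := by
  simp only [toSet, rotCW, Set.mem_ofPred_eq]
  constructor <;> rintro ⟨h₁, h₂, h₃, h₄⟩ <;> refine ⟨?_, ?_, ?_, ?_⟩ <;> linarith

theorem mem_interior_rotCW : p ∈ R.rotCW.interior ↔ (-p.2, p.1) ∈ R.interior := by
  simp only [interior, rotCW, Set.mem_ofPred_eq]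
  constructor <;> rintro ⟨h₁, h₂, h₃, h₄⟩ <;> refine ⟨?_, ?_, ?_, ?_⟩ <;> linarith

theorem disjoint_interior_rotCW (h : Disjoint R.interior S.interior) :
    Disjoint R.rotCW.interior S.rotCW.interior :=
  Set.disjoint_left.2 fun _ hR hS =>
    Set.disjoint_left.1 h (mem_interior_rotCW.1 hR) (mem_interior_rotCW.1 hS)

theorem contact_rotCW_iff : R.Contact S.rotCW ↔ R.rotCCW.Contact S := by
  simp only [contact_iff, rotCW, rotCCW]
  grind

theorem rotCW_contact_rotCW_iff : R.rotCW.Contact S.rotCW ↔ R.Contact S := by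
  simp only [contact_iff, rotCW_xlo, rotCW_xhi, rotCW_ylo, rotCW_yhi, neg_lt_neg_iff, neg_inj]
  tauto

end Rect

def NonCrossing (T : Finset (ℕ × ℕ)) : Prop :=
  ∀ p ∈ T, ∀ q ∈ T, ¬(p.1 < q.1 ∧ q.1 < p.2 ∧ p.2 < q.2)

namespace NonCrossing

open Finset

variable {T : Finset (ℕ × ℕ)} {m : ℕ}

/-- Each long arc `p` is charged to the last point `x` strictly inside it with `x = p.1 + 1` or
with `(p.1, x)` an arc; two arcs charged to the same point would cross. -/
theorem card_long_le (hT : NonCrossing T) (hm : ∀ p ∈ T, p.1 + 2 ≤ p.2 ∧ p.2 ≤ m) :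
    #T ≤ m - 1 := by
  classical
  let marks (p : ℕ × ℕ) := (Ioo p.1 p.2).filter fun x => x = p.1 + 1 ∨ (p.1, x) ∈ T
  let mark (p : ℕ × ℕ) := (marks p).sup id
  have mark_spec (p) (hp : p ∈ T) :
      (p.1 < mark p ∧ mark p < p.2) ∧ (mark p = p.1 + 1 ∨ (p.1, mark p) ∈ T) := by
    have := (hm p hp).1
    obtain ⟨x, hx, hmx⟩ := (marks p).exists_mem_eq_sup
      ⟨p.1 + 1, mem_filter.2 ⟨mem_Ioo.2 ⟨by omega, by omega⟩, Or.inl rfl⟩⟩ id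
    rw [mem_filter, mem_Ioo] at hx
    simpa only [mark, hmx, id] using hx
  have le_mark (p) {y} (hy : p.1 < y ∧ y < p.2) (hpy : (p.1, y) ∈ T) : y ≤ mark p :=
    le_sup (f := id) (mem_filter.2 ⟨mem_Ioo.2 hy, Or.inr hpy⟩)
  have le_of_mark_eq (p) (hp : p ∈ T) (q) (hq : q ∈ T) (h : mark p = mark q) :
      p.1 ≤ q.1 ∧ p.2 ≤ q.2 := by
    obtain ⟨⟨hp₁, hp₂⟩, hpm⟩ := mark_spec p hp
    obtain ⟨⟨hq₁, hq₂⟩, hqm⟩ := mark_spec q hq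
    rcases lt_trichotomy p.1 q.1 with h₁ | h₁ | h₁
    · rcases hpm with hpm | hpm
      · omega
      · exact absurd ⟨h₁, by omega, by omega⟩ (hT _ hpm q hq)
    · refine ⟨h₁.le, not_lt.1 fun h₂ => ?_⟩
      have := le_mark p ⟨by omega, h₂⟩ (show (p.1, q.2) ∈ T by rwa [h₁])
      omega
    · rcases hqm with hqm | hqm
      · omega
      · exact absurd ⟨h₁, by omega, by omega⟩ (hT _ hqm p hp)
  calc #T ≤ #(Ioo 0 m) := card_le_card_of_injOn mark
          (fun p hp => by
            have := mark_spec p hp; have := hm p hp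
            rw [mem_coe, mem_Ioo]; omega)
          (fun p hp q hq h => Prod.ext
            (le_antisymm (le_of_mark_eq p hp q hq h).1 (le_of_mark_eq q hq p hp h.symm).1)
            (le_antisymm (le_of_mark_eq p hp q hq h).2 (le_of_mark_eq q hq p hp h.symm).2))
    _ = m - 1 := by rw [Nat.card_Ioo, Nat.sub_zero]

theorem card_le (hT : NonCrossing T) (hm : ∀ p ∈ T, p.1 < p.2 ∧ p.2 ≤ m) : #T ≤ 2 * m - 1 := by
  classical
  have hshort : #(T.filter fun p => p.2 = p.1 + 1) ≤ m :=
    calc _ ≤ #(range m) := card_le_card_of_injOn Prod.fst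
            (fun p hp => by
              rw [mem_coe, mem_filter] at hp
              have := hm p hp.1
              rw [mem_coe, mem_range]; omega)
            (fun p hp q hq h => by
              rw [mem_coe, mem_filter] at hp hq
              exact Prod.ext h (by rw [hp.2, hq.2, h]))
      _ = m := card_range m
  have hlong : #(T.filter fun p => ¬p.2 = p.1 + 1) ≤ m - 1 :=
    card_long_le (fun p hp q hq => hT p (mem_filter.1 hp).1 q (mem_filter.1 hq).1)
      fun p hp => by rw [mem_filter] at hp; have := hm p hp.1; omega
  have := card_filter_add_card_filter_not (s := T) fun p => p.2 = p.1 + 1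
  omega

/-- Take the last `c` inside `(a, b)` with `(a, c)` an arc: if `(c, b)` were missing, it could be
added without crossing, beating `card_le`. -/
theorem exists_apex (hT : NonCrossing T) (hm : ∀ p ∈ T, p.1 < p.2 ∧ p.2 ≤ m)
    (hcard : 2 * m - 1 ≤ #T) (hside : ∀ k < m, (k, k + 1) ∈ T) {a b : ℕ} (hab : (a, b) ∈ T)
    (h2 : a + 2 ≤ b) : ∃ c, a < c ∧ c < b ∧ (a, c) ∈ T ∧ (c, b) ∈ T := by
  classical
  by_contra! hno
  have hbm := (hm _ hab).2
  let A := (Ioo a b).filter fun c => (a, c) ∈ T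
  have hA : A.Nonempty := ⟨a + 1, mem_filter.2 ⟨mem_Ioo.2 ⟨by omega, by omega⟩, hside a (by omega)⟩⟩
  obtain ⟨hc, hac⟩ := mem_filter.1 (A.max'_mem hA)
  set c := A.max' hA
  rw [mem_Ioo] at hc
  have hcb : (c, b) ∉ T := hno c hc.1 hc.2 hac
  have hc2 : c + 2 ≤ b := by
    by_contra
    exact hcb (by convert hside c (by omega) using 2; omega)
  have hnc : NonCrossing (insert (c, b) T) := by
    intro p hp q hq hpq
    rw [mem_insert] at hp hq
    rcases hp with rfl | hp <;> rcases hq with rfl | hq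
    · omega
    · exact hT _ hab q hq ⟨by omega, hpq.2.1, hpq.2.2⟩
    · rcases lt_trichotomy p.1 a with h | h | h
      · exact hT p hp _ hab ⟨h, by omega, hpq.2.2⟩
      · have := A.le_max' p.2 (mem_filter.2 ⟨mem_Ioo.2 ⟨by omega, by omega⟩, by rwa [← h]⟩)
        omega
      · exact hT _ hac p hp ⟨h, hpq.1, hpq.2.1⟩
    · exact hT p hp q hq hpq
  have := hnc.card_le (m := m) (by
    simp only [mem_insert, forall_eq_or_imp]; exact ⟨⟨by omega, hbm⟩, hm⟩)
  rw [card_insert_of_notMem hcb] at this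
  omega

end NonCrossing

/-- The vertices are numbered along the boundary of the polygon. -/
structure IsTriangulatedPolygon (H : SimpleGraph ℕ) : Prop where
  not_cross : ∀ {a b c d}, H.Adj a b → H.Adj c d → ¬(a < c ∧ c < b ∧ b < d)
  exists_apex : ∀ {a b}, H.Adj a b → a + 2 ≤ b → ∃ c, a < c ∧ c < b ∧ H.Adj a c ∧ H.Adj c b

namespace SimpleGraph

open Finset Classical

variable {n : ℕ} (G : SimpleGraph (Fin n))

noncomputable def edgePairs : Finset (ℕ × ℕ) :=
  (range n ×ˢ range n).filter fun p => p.1 < p.2 ∧ (G.map Fin.valEmbedding).Adj p.1 p.2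

variable {G}

theorem lt_of_map_valEmbedding_adj {a b : ℕ} (h : (G.map Fin.valEmbedding).Adj a b) : b < n := by
  obtain ⟨-, v, -, -, rfl⟩ := (map_adj _ _ _ _).1 h
  exact v.2

theorem mem_edgePairs {p : ℕ × ℕ} :
    p ∈ G.edgePairs ↔ p.1 < p.2 ∧ (G.map Fin.valEmbedding).Adj p.1 p.2 := by
  refine ⟨fun hp => (mem_filter.1 hp).2, fun hp => mem_filter.2 ⟨?_, hp⟩⟩
  have := lt_of_map_valEmbedding_adj hp.2
  rw [mem_product, mem_range, mem_range]
  omega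

theorem card_edgePairs : #G.edgePairs = G.edgeSet.ncard := by
  rw [Set.ncard_eq_toFinset_card' G.edgeSet]
  symm
  apply card_nbij fun e => ((Sym2.inf e : Fin n).val, (Sym2.sup e : Fin n).val)
  · intro e he
    induction e with | _ u v => ?_
    rw [mem_coe, Set.mem_toFinset, mem_edgeSet] at he
    rw [mem_coe, mem_edgePairs]
    rcases lt_or_gt_of_ne he.ne with h | h
    · simp only [Sym2.inf_mk, Sym2.sup_mk, inf_of_le_left h.le, sup_of_le_right h.le]
      exact ⟨h, map_adj_apply.2 he⟩
    · simp only [Sym2.inf_mk, Sym2.sup_mk, inf_of_le_right h.le, sup_of_le_left h.le]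
      exact ⟨h, map_adj_apply.2 he.symm⟩
  · intro e _ e' _ h
    rw [Prod.mk.injEq] at h
    exact Sym2.inf_eq_inf_and_sup_eq_sup.1 ⟨Fin.ext h.1, Fin.ext h.2⟩
  · rintro ⟨p₁, p₂⟩ hp
    rw [mem_coe, mem_edgePairs, map_adj] at hp
    obtain ⟨hlt, u, v, huv, rfl, rfl⟩ := hp
    have huv' : u ≤ v := (Fin.lt_def.2 hlt).le
    refine ⟨s(u, v), by rwa [mem_coe, Set.mem_toFinset], ?_⟩
    simp only [Sym2.inf_mk, Sym2.sup_mk, inf_of_le_left huv', sup_of_le_right huv',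
      Fin.valEmbedding_apply]

end SimpleGraph

namespace MaxOuterplanar

variable {n : ℕ} {G : SimpleGraph (Fin n)} (hG : MaxOuterplanar n G)
include hG

theorem map_adj_succ {k : ℕ} (hk : k + 1 < n) : (G.map Fin.valEmbedding).Adj k (k + 1) :=
  (SimpleGraph.map_adj _ _ _ _).2 ⟨_, _, hG.1 ⟨k, by omega⟩ (by omega), rfl, Nat.mod_eq_of_lt hk⟩

theorem map_adj_zero_last (hn : 1 < n) : (G.map Fin.valEmbedding).Adj 0 (n - 1) := by
  have := hG.1 ⟨n - 1, by omega⟩ hn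
  simp only [Nat.sub_add_cancel (by omega : 1 ≤ n), Nat.mod_self] at this
  exact (SimpleGraph.map_adj_apply.2 this).symm

theorem map_not_cross {a b c d : ℕ} (hab : (G.map Fin.valEmbedding).Adj a b)
    (hcd : (G.map Fin.valEmbedding).Adj c d) : ¬(a < c ∧ c < b ∧ b < d) := by
  obtain ⟨a', b', hab', rfl, rfl⟩ := (SimpleGraph.map_adj _ _ _ _).1 hab
  obtain ⟨c', d', hcd', rfl, rfl⟩ := (SimpleGraph.map_adj _ _ _ _).1 hcd
  exact hG.2.1 a' b' c' d' hab' hcd'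

theorem isTriangulatedPolygon : IsTriangulatedPolygon (G.map Fin.valEmbedding) where
  not_cross := hG.map_not_cross
  exists_apex {a b} hab h2 := by
    have hbound (p) (hp : p ∈ G.edgePairs) : p.1 < p.2 ∧ p.2 ≤ n - 1 := by
      have := SimpleGraph.mem_edgePairs.1 hp
      have := SimpleGraph.lt_of_map_valEmbedding_adj this.2
      omega
    obtain ⟨c, hac, hcb, hac', hcb'⟩ := NonCrossing.exists_apex (m := n - 1)
      (fun p hp q hq => hG.map_not_cross (SimpleGraph.mem_edgePairs.1 hp).2
        (SimpleGraph.mem_edgePairs.1 hq).2) hbound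
      (by rw [SimpleGraph.card_edgePairs, hG.2.2]; omega)
      (fun k hk => SimpleGraph.mem_edgePairs.2 ⟨k.lt_succ_self, hG.map_adj_succ (by omega)⟩)
      (SimpleGraph.mem_edgePairs.2 ⟨by omega, hab⟩) h2
    exact ⟨c, hac, hcb, (SimpleGraph.mem_edgePairs.1 hac').2, (SimpleGraph.mem_edgePairs.1 hcb').2⟩

end MaxOuterplanar

def CornersFree (j c : ℕ) (R S : Rect) : Prop :=
  (c ≤ j → (R.xhi, R.yhi) ∉ S.toSet) ∧ (j ≤ c → (R.xhi, R.ylo) ∉ S.toSet)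

structure Compatible (H : SimpleGraph ℕ) (j c : ℕ) (R : Rect) (e : ℕ) (S : Rect) : Prop where
  disjoint : Disjoint R.interior S.interior
  contact_iff : R.Contact S ↔ H.Adj c e
  corners_left : CornersFree j c R S
  corners_right : CornersFree j e S R

namespace Compatible

variable {H : SimpleGraph ℕ} {j c e : ℕ} {R S : Rect}

theorem symm (h : Compatible H j c R e S) : Compatible H j e S c R :=
  ⟨h.disjoint.symm, Rect.contact_comm.trans (h.contact_iff.trans (H.adj_comm c e)),
    h.corners_right, h.corners_left⟩

theorem of_xhi_lt_xlo (hRS : R.xhi < S.xlo) (hce : ¬H.Adj c e) : Compatible H j c R e S := by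
  have := R.hx; have := S.hx
  refine ⟨Rect.disjoint_interior_of_xhi_le hRS.le,
    iff_of_false (Rect.not_contact_of_xhi_lt hRS) hce, ⟨?_, ?_⟩, ⟨?_, ?_⟩⟩ <;>
  rintro - ⟨h₁, h₂, -⟩ <;> dsimp only at h₁ h₂ <;> linarith

theorem of_yhi_lt_ylo (hRS : R.yhi < S.ylo) (hce : ¬H.Adj c e) : Compatible H j c R e S := by
  have := R.hy; have := S.hy
  refine ⟨Rect.disjoint_interior_of_yhi_le hRS.le,
    iff_of_false (Rect.not_contact_of_yhi_lt hRS) hce, ⟨?_, ?_⟩, ⟨?_, ?_⟩⟩ <;>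
  rintro - ⟨-, -, h₁, h₂⟩ <;> dsimp only at h₁ h₂ <;> linarith

/-- Under the quarter turn, top-right corners become bottom-right ones. -/
theorem rotCW {k : ℕ} (h : Compatible H k c R e S) (hck : c ≤ k) (hek : e ≤ k) (hjc : j < c)
    (hje : j < e) : Compatible H j c R.rotCW e S.rotCW := by
  refine ⟨Rect.disjoint_interior_rotCW h.disjoint,
    Rect.rotCW_contact_rotCW_iff.trans h.contact_iff,
    ⟨fun hcj => absurd hcj (by omega), fun _ => ?_⟩,
    ⟨fun hej => absurd hej (by omega), fun _ => ?_⟩⟩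
  · simpa [Rect.mem_toSet_rotCW] using h.corners_left.1 hck
  · simpa [Rect.mem_toSet_rotCW] using h.corners_right.1 hek

end Compatible

section Glue

open Set

variable {α : Type*} {a b c d : ℕ} {f g : ℕ → α} {r : α}

def glue (c : ℕ) (f : ℕ → α) (r : α) (g : ℕ → α) (d : ℕ) : α :=
  if d < c then f d else if d = c then r else g d

theorem glue_cases (hd : d ∈ Ioo a b) :
    (d ∈ Ioo a c ∧ glue c f r g d = f d) ∨ (d = c ∧ glue c f r g d = r) ∨
      (d ∈ Ioo c b ∧ glue c f r g d = g d) := by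
  rcases lt_trichotomy d c with h | rfl | h
  · exact Or.inl ⟨⟨hd.1, h⟩, if_pos h⟩
  · exact Or.inr (Or.inl ⟨rfl, by simp [glue]⟩)
  · exact Or.inr (Or.inr ⟨⟨h, hd.2⟩, by simp [glue, h.not_gt, h.ne']⟩)

theorem pairwise_compatible_glue {H : SimpleGraph ℕ} {j : ℕ} {f g : ℕ → Rect} {r : Rect}
    (hL : (Ioo a c).Pairwise fun d e => Compatible H j d (f d) e (f e))
    (hR : (Ioo c b).Pairwise fun d e => Compatible H j d (g d) e (g e))
    (hLc : ∀ d ∈ Ioo a c, Compatible H j c r d (f d))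
    (hRc : ∀ e ∈ Ioo c b, Compatible H j c r e (g e))
    (hLR : ∀ d ∈ Ioo a c, ∀ e ∈ Ioo c b, Compatible H j d (f d) e (g e)) :
    (Ioo a b).Pairwise fun d e => Compatible H j d (glue c f r g d) e (glue c f r g e) := by
  intro d hd e he hde
  obtain ⟨hd, hd'⟩ | ⟨hdc, hd'⟩ | ⟨hd, hd'⟩ := glue_cases (c := c) (f := f) (r := r) (g := g) hd <;>
  obtain ⟨he, he'⟩ | ⟨hec, he'⟩ | ⟨he, he'⟩ := glue_cases (c := c) (f := f) (r := r) (g := g) he <;>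
  rw [hd', he'] <;> (try subst hdc) <;> (try subst hec)
  all_goals first
    | exact hL hd he hde | exact hR hd he hde | exact hLc _ he | exact (hLc _ hd).symm
    | exact hRc _ he | exact (hRc _ hd).symm | exact hLR _ hd _ he | exact (hLR _ he _ hd).symm
    | exact absurd (by omega) hde

end Glue

/-- An area that suffices for laying out the vertices strictly between `a` and `b`; the factor
`(w + 1)² / w` of the apex is what lets the two sub-pockets fit next to its rectangle. -/
noncomputable def capacity (w : ℕ → ℝ) (a b : ℕ) : ℝ :=
  ∏ v ∈ Finset.Ioo a b, (w v + 1) ^ 2 / w v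

section Capacity

variable {w : ℕ → ℝ} {a b c : ℕ}

theorem one_le_capacity (hw : ∀ v, 0 < w v) : 1 ≤ capacity w a b :=
  Finset.one_le_prod fun v _ => by
    rw [one_le_div (hw v)]
    nlinarith [hw v]

theorem capacity_eq_mul (hac : a < c) (hcb : c < b) :
    capacity w a b = capacity w a c * ((w c + 1) ^ 2 / w c) * capacity w c b := by
  simp only [capacity, ← Finset.Ico_add_one_left_eq_Ioo]
  rw [← Finset.prod_Ico_consecutive _ (by omega : a + 1 ≤ c) hcb.le,
    Finset.prod_eq_prod_Ico_succ_bot hcb, mul_assoc]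

end Capacity

theorem add_mul_add_le_mul {K L t : ℝ} (hK : 1 ≤ K) (hL : 1 ≤ L) (ht : 0 < t) :
    (K + t) * (L + t) ≤ t * (K * ((t + 1) ^ 2 / t) * L) := by
  rw [show t * (K * ((t + 1) ^ 2 / t) * L) = K * L * (t + 1) ^ 2 by field_simp]
  have hKL : 1 ≤ K * L := one_le_mul_of_one_le_of_one_le hK hL
  nlinarith [mul_nonneg (mul_nonneg ht.le ht.le) (sub_nonneg.2 hKL),
    mul_nonneg ht.le (mul_nonneg (by linarith : (0 : ℝ) ≤ K) (sub_nonneg.2 hL)),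
    mul_nonneg ht.le (mul_nonneg (by linarith : (0 : ℝ) ≤ L) (sub_nonneg.2 hK))]

theorem exists_staircase_split {K L t A B : ℝ} (hK : 0 ≤ K) (hL : 0 ≤ L) (ht : 0 < t)
    (hA : 0 < A) (hfit : (K + t) * (L + t) < t * (A * B)) :
    ∃ u h : ℝ, 0 < u ∧ 0 < h ∧ u * h = t ∧ h < A ∧ u < B ∧ K < (A - h) * u ∧
      L < h * (B - u) := by
  have hLt : 0 < L + t := by linarith
  obtain ⟨u, hu₁, hu₂⟩ : ∃ u, (K + t) / A < u ∧ u < t * B / (L + t) :=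
    exists_between (by rw [div_lt_div_iff₀ hA hLt]; linarith)
  rw [div_lt_iff₀' hA] at hu₁
  rw [lt_div_iff₀ hLt] at hu₂
  have hu : 0 < u := by nlinarith
  refine ⟨u, t / u, hu, div_pos ht hu, by field_simp, ?_, by nlinarith, ?_, ?_⟩
  · rw [div_lt_iff₀ hu]; nlinarith
  · rw [sub_mul, div_mul_cancel₀ _ hu.ne']; linarith
  · rw [mul_sub, div_mul_cancel₀ _ hu.ne', div_mul_eq_mul_div, lt_sub_iff_add_lt, lt_div_iff₀ hu]
    linarith

theorem exists_transition_split {K L t A B D : ℝ} (hK : 0 ≤ K) (hL : 0 ≤ L) (ht : 0 < t)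
    (hA : 0 < A) (hB : 0 < B) (hD : 0 < D) :
    ∃ u h : ℝ, 0 < u ∧ 0 < h ∧ u * h = t ∧ h < A ∧ B < u ∧ K < (A - h) * u ∧
      L < (u - B) * D := by
  have hKA : K + t = A * ((K + t) / A) := by field_simp
  have hLD : L = L / D * D := by field_simp
  have : 0 ≤ (K + t) / A := by positivity
  have : 0 ≤ L / D := by positivity
  set u := (K + t) / A + B + L / D + 1
  have hu : 0 < u := by linarith
  have hu₁ : K + t < A * u := by nlinarith
  refine ⟨u, t / u, hu, div_pos ht hu, by field_simp, ?_, by linarith, ?_, by nlinarith⟩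
  · rw [div_lt_iff₀ hu]; nlinarith
  · rw [sub_mul, div_mul_cancel₀ _ hu.ne']; linarith

/-- The rectangle `R` of vertex `c` lies in the pocket of the edge `ab` with corner `(x, y)`.
The rectangle of `a` is to lie left of the line `X = x`, touching it along `[y, y + ha]`; that of
`b` lies below `Y = y`, touches it along `[x, x + wb]` and has its right side on `X = x + wb`.
Vertices beyond the pivot `j` may also go into the strip `X ≥ x + wb, y - d < Y ≤ y` right of
`b`. -/
structure InPocket (H : SimpleGraph ℕ) (w : ℕ → ℝ) (j a b : ℕ) (x y ha wb d : ℝ) (c : ℕ)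
    (R : Rect) : Prop where
  area_eq : R.area = w c
  x_le_xlo : x ≤ R.xlo
  mem_zone : y ≤ R.ylo ∨ x + wb ≤ R.xlo ∧ y - d < R.ylo ∧ R.yhi ≤ y ∧ j < c
  xlo_eq_iff : R.xlo = x ↔ H.Adj a c
  adj_left_span : H.Adj a c → y ≤ R.ylo ∧ R.yhi < y + ha
  adj_right_iff : H.Adj c b ↔ R.ylo = y ∨ R.xlo = x + wb ∧ R.yhi ≤ y ∧ j < c
  floor_span : R.ylo = y →
    R.xlo < x + wb ∧ (c < j → R.xhi < x + wb) ∧ (j ≤ c → x + wb < R.xhi)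
  xhi_lt : b ≤ j → R.xhi < x + wb

structure PocketLayout (H : SimpleGraph ℕ) (w : ℕ → ℝ) (j a b : ℕ) (x y ha wb d : ℝ)
    (ρ : ℕ → Rect) : Prop where
  inPocket : ∀ c ∈ Set.Ioo a b, InPocket H w j a b x y ha wb d c (ρ c)
  pairwise : (Set.Ioo a b).Pairwise fun c e => Compatible H j c (ρ c) e (ρ e)

namespace InPocket

variable {H : SimpleGraph ℕ} {w : ℕ → ℝ} {j a b c e : ℕ} {x y ha wb d u h : ℝ} {R S : Rect}

section

variable (P : InPocket H w j a b x y ha wb d c R)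
include P

theorem x_lt_xhi : x < R.xhi :=
  P.x_le_xlo.trans_lt R.hx

theorem sub_lt_ylo (hd : 0 < d) : y - d < R.ylo := by
  rcases P.mem_zone with h | h
  · linarith
  · exact h.2.1

theorem y_lt_yhi (hcj : c ≤ j) : y < R.yhi := by
  rcases P.mem_zone with h | h
  · exact h.trans_lt R.hy
  · omega

theorem lt_xhi (hjc : j ≤ c) (hy : R.ylo ≤ y) : x + wb < R.xhi := by
  rcases P.mem_zone with h | h
  · exact (P.floor_span (le_antisymm hy h)).2.2 hjc
  · exact h.1.trans_lt R.hx

theorem compatible_left_wall {ra : Rect} (hx : ra.xhi = x) (hlo : ra.ylo ≤ y)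
    (hhi : y + ha ≤ ra.yhi) (hbr : j ≤ a → ra.ylo ≤ y - d) (hd : 0 < d) :
    Compatible H j a ra c R := by
  have := ra.hx; have := R.hy; have := P.x_le_xlo; have := P.x_lt_xhi
  refine ⟨Rect.disjoint_interior_of_xhi_le (hx ▸ P.x_le_xlo), ⟨fun h => ?_, fun h => ?_⟩,
    ⟨?_, ?_⟩, ⟨?_, ?_⟩⟩
  · rw [Rect.contact_iff] at h
    rcases h with ⟨h | h, -⟩ | ⟨-, -, h⟩
    · exact P.xlo_eq_iff.1 (by linarith)
    all_goals linarith
  · have hspan := P.adj_left_span h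
    rw [Rect.contact_iff]
    exact Or.inl ⟨Or.inl (hx.trans (P.xlo_eq_iff.2 h).symm), by linarith, by linarith⟩
  · rintro - ⟨h₁, -, -, h₄⟩
    have hadj := P.xlo_eq_iff.1 (le_antisymm (hx ▸ h₁) P.x_le_xlo)
    exact h₄.not_gt ((P.adj_left_span hadj).2.trans_le hhi)
  · rintro hja ⟨-, -, h₃, -⟩
    exact h₃.not_gt ((hbr hja).trans_lt (P.sub_lt_ylo hd))
  all_goals rintro - ⟨-, h₂, -⟩; exact h₂.not_gt (hx ▸ P.x_lt_xhi)

theorem compatible_floor {rb : Rect} (hy : rb.yhi = y) (hlo : rb.xlo ≤ x)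
    (hhi : rb.xhi = x + wb) (hd : 0 < d) (hylo : rb.ylo ≤ y - d) : Compatible H j b rb c R := by
  have := P.x_le_xlo; have := P.sub_lt_ylo hd
  have := rb.hx; have := R.hx; have := R.hy
  refine ⟨?_, ⟨fun h => ?_, fun h => ?_⟩, ⟨?_, ?_⟩, ⟨?_, ?_⟩⟩
  · rcases P.mem_zone with h | h
    · exact Rect.disjoint_interior_of_yhi_le (hy ▸ h)
    · exact Rect.disjoint_interior_of_xhi_le (hhi ▸ h.1)
  · rw [H.adj_comm, P.adj_right_iff]
    rw [Rect.contact_iff] at h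
    rcases h with ⟨h | h, -, h'⟩ | ⟨h | h, -⟩
    · rcases P.mem_zone with h'' | h''
      · linarith
      · exact Or.inr ⟨by linarith, h''.2.2⟩
    · linarith
    · exact Or.inl (by linarith)
    · linarith
  · rw [H.adj_comm, P.adj_right_iff] at h
    rw [Rect.contact_iff]
    rcases h with h | h
    · exact Or.inr ⟨Or.inl (by linarith), by linarith, by linarith [(P.floor_span h).1]⟩
    · exact Or.inl ⟨Or.inl (by linarith), by linarith, by linarith⟩
  · rintro hbj ⟨-, h₂, -⟩
    exact h₂.not_gt (hhi ▸ P.xhi_lt hbj)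
  · rintro - ⟨-, -, h₃, -⟩
    linarith
  · rintro hcj ⟨-, -, -, h₄⟩
    exact h₄.not_gt (hy ▸ P.y_lt_yhi hcj)
  · rintro hjc ⟨-, h₂, -, h₄⟩
    exact h₂.not_gt (hhi ▸ P.lt_xhi hjc (hy ▸ h₄))

end

theorem apex (hadj_ac : H.Adj a c) (hadj_cb : H.Adj c b) (hcb : c < b) (hu : 0 < u) (hh : 0 < h)
    (huh : u * h = w c) (hha : h < ha) (hwb : 0 < wb) (hlt : c < j → u < wb)
    (hgt : j ≤ c → wb < u) : InPocket H w j a b x y ha wb d c (Rect.ofSize x y hu hh) where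
  area_eq := by rw [Rect.area_ofSize, huh]
  x_le_xlo := le_rfl
  mem_zone := Or.inl le_rfl
  xlo_eq_iff := iff_of_true rfl hadj_ac
  adj_left_span _ := ⟨le_rfl, by simp [hha]⟩
  adj_right_iff := iff_of_true hadj_cb (Or.inl rfl)
  floor_span _ := ⟨by simp [hwb], fun hcj => by simp [hlt hcj], fun hjc => by simp [hgt hjc]⟩
  xhi_lt hbj := by simp [hlt (by omega)]

theorem of_above (P : InPocket H w j a c x (y + h) (ha - h) u h e R) (hh : 0 < h)
    (hadj : ¬H.Adj e b) (hxhi : b ≤ j → R.xhi < x + wb) : InPocket H w j a b x y ha wb d e R := by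
  have hylo : y < R.ylo := by linarith [P.sub_lt_ylo hh]
  have := R.hy
  refine ⟨P.area_eq, P.x_le_xlo, Or.inl hylo.le, P.xlo_eq_iff, fun hae => ?_,
    iff_of_false hadj ?_, fun h' => absurd h' hylo.ne', hxhi⟩
  · have := P.adj_left_span hae
    constructor <;> linarith
  · rintro (h' | h')
    · exact hylo.ne' h'
    · linarith [h'.2.1]

theorem of_right (P : InPocket H w j c b (x + u) y h (wb - u) d e R) (hu : 0 < u)
    (hadj : ¬H.Adj a e) : InPocket H w j a b x y ha wb d e R := by
  have hwb : x + u + (wb - u) = x + wb := by ring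
  refine ⟨P.area_eq, by linarith [P.x_le_xlo], by simpa only [hwb] using P.mem_zone,
    iff_of_false (by linarith [P.x_le_xlo]) hadj, fun hae => absurd hae hadj,
    by simpa only [hwb] using P.adj_right_iff, by simpa only [hwb] using P.floor_span,
    by simpa only [hwb] using P.xhi_lt⟩

theorem of_rotCW (P : InPocket H w b c b (-y) (x + wb) (u - wb) d d e S) (heb : e < b)
    (hje : j < e) (hwb : 0 < wb) (hadj : ¬H.Adj a e) :
    InPocket H w j a b x y ha wb d e S.rotCW := by
  have hxlo : x + wb ≤ S.rotCW.xlo := P.mem_zone.resolve_right (by omega)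
  have hylo : y - d < S.rotCW.ylo := by rw [Rect.rotCW_ylo]; linarith [P.xhi_lt le_rfl]
  have hyhi : S.rotCW.yhi ≤ y := by rw [Rect.rotCW_yhi]; linarith [P.x_le_xlo]
  have := S.rotCW.hy
  refine ⟨Rect.area_rotCW.trans P.area_eq, by linarith, Or.inr ⟨hxlo, hylo, hyhi, hje⟩,
    iff_of_false (by linarith) hadj, fun hae => absurd hae hadj, ?_, fun h' => by linarith,
    fun hbj => by omega⟩
  rw [P.adj_right_iff]
  constructor
  · rintro (h' | h')
    · exact Or.inr ⟨h', hyhi, hje⟩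
    · exact absurd h'.2.2 (by omega)
  · rintro (h' | h')
    · linarith
    · exact Or.inl h'.1

/-- The apex rectangle is the left wall of the rotated pocket of `cb`. -/
theorem compatible_apex_rotCW (P : InPocket H w b c b (-y) (x + wb) (u - wb) d d e S)
    (hu : 0 < u) (hh : 0 < h) (hwb : 0 < wb) (hjc : j ≤ c) (hce : c < e) (heb : e < b)
    (hd : 0 < d) : Compatible H j c (Rect.ofSize x y hu hh) e S.rotCW := by
  have hwall := P.compatible_left_wall (ra := (Rect.ofSize x y hu hh).rotCCW)
    (by simp) (by simp; linarith) (by simp) (fun h' => by omega) hd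
  have hyhi : S.rotCW.yhi ≤ y := by rw [Rect.rotCW_yhi]; linarith [P.x_le_xlo]
  have := S.hx
  refine ⟨(Rect.disjoint_interior_of_yhi_le hyhi).symm,
    Rect.contact_rotCW_iff.trans hwall.contact_iff, ⟨?_, ?_⟩, ⟨fun hej => by omega, ?_⟩⟩
  · rintro - ⟨-, -, -, h₄⟩
    dsimp only at h₄
    simp only [Rect.ofSize_yhi, Rect.rotCW_yhi] at h₄ hyhi
    linarith
  · exact fun _ h' => hwall.corners_left.1 (hce.trans heb).le (Rect.mem_toSet_rotCW.1 h')
  · rintro - ⟨-, -, h₃, -⟩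
    dsimp only at h₃
    simp only [Rect.ofSize_ylo, Rect.rotCW_ylo, Rect.rotCW_yhi] at h₃ hyhi
    linarith

end InPocket

namespace PocketLayout

open Set

variable {H : SimpleGraph ℕ} {w : ℕ → ℝ} {j a b c : ℕ} {x y ha wb d u h : ℝ}
  {ρ ρL ρR : ℕ → Rect}

theorem of_le_succ (hab : b ≤ a + 1) : PocketLayout H w j a b x y ha wb d ρ := by
  have h : Ioo a b = ∅ :=
    eq_empty_of_forall_notMem fun c hc => by have := hc.1; have := hc.2; omega
  constructor <;> simp [h]

/-- Below the pivot, the layout of `ac` goes on top of the apex rectangle and the layout of `cb`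
to its right. -/
theorem staircase (hH : IsTriangulatedPolygon H) (hac : a < c) (hcb : c < b)
    (hadj_ac : H.Adj a c) (hadj_cb : H.Adj c b) (hcj : c < j) (hu : 0 < u) (hh : 0 < h)
    (huh : u * h = w c) (hha : h < ha) (hwb : u < wb) (hd : 0 < d)
    (L : PocketLayout H w j a c x (y + h) (ha - h) u h ρL)
    (R : PocketLayout H w j c b (x + u) y h (wb - u) d ρR) :
    PocketLayout H w j a b x y ha wb d (glue c ρL (Rect.ofSize x y hu hh) ρR) := by
  have hxhi (e) (he : e ∈ Ioo a c) : (ρL e).xhi < x + u := (L.inPocket e he).xhi_lt hcj.le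
  refine ⟨fun e he => ?_, pairwise_compatible_glue L.pairwise R.pairwise
    (fun e he => (L.inPocket e he).compatible_floor (by simp) (by simp) (by simp) hh (by simp))
    (fun e he => (R.inPocket e he).compatible_left_wall (by simp) (by simp) (by simp)
      (fun h' => by omega) hd)
    fun e he e' he' => .of_xhi_lt_xlo ((hxhi e he).trans_le (R.inPocket e' he').x_le_xlo)
      fun hee' => hH.not_cross hadj_ac hee' ⟨he.1, he.2, he'.1⟩⟩
  obtain ⟨he, hρ⟩ | ⟨rfl, hρ⟩ | ⟨he, hρ⟩ := glue_cases (c := c) (f := ρL)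
    (r := Rect.ofSize x y hu hh) (g := ρR) he <;> rw [hρ]
  · exact (L.inPocket e he).of_above hh (fun heb => hH.not_cross hadj_ac heb ⟨he.1, he.2, hcb⟩)
      fun _ => (hxhi e he).trans (by linarith)
  · exact .apex hadj_ac hadj_cb hcb hu hh huh hha (hu.trans hwb) (fun _ => hwb)
      fun hjc => absurd hjc (by omega)
  · exact (R.inPocket e he).of_right hu fun hae => hH.not_cross hae hadj_cb ⟨hac, he.1, he.2⟩

/-- From the pivot on, the layout of `ac` goes on top of the apex rectangle and the layout of
`cb`, made for pivot `b` and turned a quarter clockwise, below it, right of the rectangle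
of `b`. -/
theorem transition (hH : IsTriangulatedPolygon H) (hac : a < c) (hcb : c < b)
    (hadj_ac : H.Adj a c) (hadj_cb : H.Adj c b) (hjc : j ≤ c) (hu : 0 < u) (hh : 0 < h)
    (huh : u * h = w c) (hha : h < ha) (hwb : 0 < wb) (hwbu : wb < u) (hd : 0 < d)
    (L : PocketLayout H w j a c x (y + h) (ha - h) u h ρL)
    (R : PocketLayout H w b c b (-y) (x + wb) (u - wb) d d ρR) :
    PocketLayout H w j a b x y ha wb d
      (glue c ρL (Rect.ofSize x y hu hh) fun e => (ρR e).rotCW) := by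
  have hylo (e) (he : e ∈ Ioo a c) : y < (ρL e).ylo := by
    linarith [(L.inPocket e he).sub_lt_ylo hh]
  have hyhi (e) (he : e ∈ Ioo c b) : (ρR e).rotCW.yhi ≤ y := by
    rw [Rect.rotCW_yhi]; linarith [(R.inPocket e he).x_le_xlo]
  refine ⟨fun e he => ?_, pairwise_compatible_glue L.pairwise
    (fun e he e' he' hee' => (R.pairwise he he' hee').rotCW he.2.le he'.2.le
      (hjc.trans_lt he.1) (hjc.trans_lt he'.1))
    (fun e he => (L.inPocket e he).compatible_floor (by simp) (by simp) (by simp) hh (by simp))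
    (fun e he => (R.inPocket e he).compatible_apex_rotCW hu hh hwb hjc he.1 he.2 hd)
    fun e he e' he' => (Compatible.of_yhi_lt_ylo ((hyhi e' he').trans_lt (hylo e he))
      fun he'e => hH.not_cross hadj_ac he'e.symm ⟨he.1, he.2, he'.1⟩).symm⟩
  obtain ⟨he, hρ⟩ | ⟨rfl, hρ⟩ | ⟨he, hρ⟩ := glue_cases (c := c) (f := ρL)
    (r := Rect.ofSize x y hu hh) (g := fun e => (ρR e).rotCW) he <;> rw [hρ]
  · exact (L.inPocket e he).of_above hh (fun heb => hH.not_cross hadj_ac heb ⟨he.1, he.2, hcb⟩)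
      fun hbj => absurd hbj (by omega)
  · exact .apex hadj_ac hadj_cb hcb hu hh huh hha hwb (fun hcj => absurd hcj (by omega))
      fun _ => hwbu
  · exact (R.inPocket e he).of_rotCW he.2 (hjc.trans_lt he.1) hwb
      fun hae => hH.not_cross hae hadj_cb ⟨hac, he.1, he.2⟩

theorem exists_of_adj (hH : IsTriangulatedPolygon H) (hw : ∀ v, 0 < w v) (hab : H.Adj a b)
    (j : ℕ) (hha : 0 < ha) (hwb : 0 < wb) (hd : 0 < d)
    (hcap : capacity w a b < ha * wb) : ∃ ρ, PocketLayout H w j a b x y ha wb d ρ := by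
  induction hN : b - a using Nat.strong_induction_on generalizing a b j x y ha wb d with
  | _ N ih =>
  rcases le_or_gt b (a + 1) with hb | hb
  · exact ⟨fun _ => Rect.ofSize 0 0 one_pos one_pos, of_le_succ hb⟩
  obtain ⟨c, hac, hcb, hadj_ac, hadj_cb⟩ := hH.exists_apex hab hb
  have hKL := one_le_capacity hw (a := a) (b := c)
  have hKR := one_le_capacity hw (a := c) (b := b)
  rcases lt_or_ge c j with hcj | hjc
  · have hfit : (capacity w a c + w c) * (capacity w c b + w c) < w c * (ha * wb) := by
      refine (add_mul_add_le_mul hKL hKR (hw c)).trans_lt (mul_lt_mul_of_pos_left ?_ (hw c))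
      rwa [← capacity_eq_mul hac hcb]
    obtain ⟨u, h, hu, hh, huh, hha', hwb', hL, hR⟩ :=
      exists_staircase_split (by linarith) (by linarith) (hw c) hha hfit
    obtain ⟨ρL, L⟩ := ih (c - a) (by omega) hadj_ac j (y := y + h) (by linarith) hu hh hL rfl
    obtain ⟨ρR, R⟩ := ih (b - c) (by omega) hadj_cb j (x := x + u) hh (by linarith) hd hR rfl
    exact ⟨_, staircase hH hac hcb hadj_ac hadj_cb hcj hu hh huh hha' hwb' hd L R⟩
  · obtain ⟨u, h, hu, hh, huh, hha', hwbu, hL, hR⟩ :=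
      exists_transition_split (by linarith : 0 ≤ capacity w a c)
        (by linarith : 0 ≤ capacity w c b) (hw c) hha hwb hd
    obtain ⟨ρL, L⟩ := ih (c - a) (by omega) hadj_ac j (y := y + h) (by linarith) hu hh hL rfl
    obtain ⟨ρR, R⟩ := ih (b - c) (by omega) hadj_cb b (x := -y) (y := x + wb)
      (by linarith) hd hd hR rfl
    exact ⟨_, transition hH hac hcb hadj_ac hadj_cb hjc hu hh huh hha' hwb hwbu hd L R⟩

theorem update_of_mem_Ioo {ra rb : Rect} {v : ℕ} (hv : v ∈ Ioo a b) :
    Function.update (Function.update ρ a ra) b rb v = ρ v := by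
  rw [Function.update_of_ne hv.2.ne, Function.update_of_ne hv.1.ne']

theorem pairwise_update (L : PocketLayout H w j a b x y ha wb d ρ) (hab : a < b) (hd : 0 < d)
    {ra rb : Rect} (hra : ra.xhi = x ∧ ra.ylo ≤ y - d ∧ y + ha ≤ ra.yhi)
    (hrb : rb.yhi = y ∧ rb.xlo ≤ x ∧ rb.xhi = x + wb ∧ rb.ylo ≤ y - d)
    (hrarb : Compatible H j a ra b rb) :
    (Icc a b).Pairwise fun u v => Compatible H j
      u (Function.update (Function.update ρ a ra) b rb u)
      v (Function.update (Function.update ρ a ra) b rb v) := by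
  have hρa : Function.update (Function.update ρ a ra) b rb a = ra := by
    rw [Function.update_of_ne hab.ne, Function.update_self]
  have hwall (v) (hv : v ∈ Ioo a b) : Compatible H j a ra v (ρ v) :=
    (L.inPocket v hv).compatible_left_wall hra.1 (by linarith) hra.2.2 (fun _ => hra.2.1) hd
  have hfloor (v) (hv : v ∈ Ioo a b) : Compatible H j b rb v (ρ v) :=
    (L.inPocket v hv).compatible_floor hrb.1 hrb.2.1 hrb.2.2.1 hd hrb.2.2.2
  rw [← Ico_insert_right hab.le, ← Ioo_insert_left hab]
  refine .insert (.insert (fun u hu v hv huv => ?_) fun v hv _ => ?_) fun v hv _ => ?_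
  · rw [update_of_mem_Ioo hu, update_of_mem_Ioo hv]; exact L.pairwise hu hv huv
  · rw [hρa, update_of_mem_Ioo hv]; exact ⟨hwall v hv, (hwall v hv).symm⟩
  · rw [Function.update_self]
    rcases hv with rfl | hv
    · rw [hρa]; exact ⟨hrarb.symm, hrarb⟩
    · rw [update_of_mem_Ioo hv]; exact ⟨hfloor v hv, (hfloor v hv).symm⟩

end PocketLayout

/-- The rectangle of `0` is a tall thin one on the left, that of `m` a unit-wide one below the
pocket of the edge `0m`. -/
theorem IsTriangulatedPolygon.exists_layout {H : SimpleGraph ℕ} {w : ℕ → ℝ}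
    (hH : IsTriangulatedPolygon H) (hw : ∀ v, 0 < w v) {m : ℕ} (hm : H.Adj 0 m) (j : ℕ) :
    ∃ ρ : ℕ → Rect, (∀ v ≤ m, (ρ v).area = w v) ∧
      (Set.Icc 0 m).Pairwise (fun u v => Compatible H j u (ρ u) v (ρ v)) ∧
      (∀ v ≤ m, (ρ 0).xlo ≤ (ρ v).xlo) ∧ (∀ v ≤ m, v ≠ 0 → (ρ m).ylo ≤ (ρ v).ylo) := by
  have hm0 : 0 < m := Nat.pos_of_ne_zero hm.ne'
  have hd := hw m
  set ha := capacity w 0 m + 1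
  have hha : 0 < ha := by linarith [one_le_capacity hw (a := 0) (b := m)]
  obtain ⟨M, hM⟩ := PocketLayout.exists_of_adj hH hw hm j (x := 0) (y := 0) hha one_pos hd
    (by linarith)
  have hwidth : 0 < w 0 / (ha + w m + 2) := div_pos (hw 0) (by linarith)
  let r₀ : Rect := ⟨-(w 0 / (ha + w m + 2)), 0, -w m - 1, ha + 1, by linarith, by linarith⟩
  let rₘ : Rect := ⟨0, 1, -w m, 0, one_pos, by linarith⟩
  have hr₀rₘ : Compatible H j 0 r₀ m rₘ := by
    refine ⟨Rect.disjoint_interior_of_xhi_le le_rfl, iff_of_true ?_ hm, ⟨?_, ?_⟩, ⟨?_, ?_⟩⟩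
    · exact Rect.contact_iff.2 (Or.inl ⟨Or.inl rfl, by simp only [r₀, rₘ]; linarith,
        by simp only [r₀, rₘ]; linarith⟩)
    all_goals rintro - ⟨h₁, h₂, h₃, h₄⟩; dsimp only at h₁ h₂ h₃ h₄; linarith
  have hρ₀ : Function.update (Function.update M 0 r₀) m rₘ 0 = r₀ := by
    rw [Function.update_of_ne hm0.ne, Function.update_self]
  have hρₘ : Function.update (Function.update M 0 r₀) m rₘ m = rₘ := Function.update_self ..
  have hcases (v) (hv : v ≤ m) : v = m ∨ v = 0 ∨ v ∈ Set.Ioo 0 m := by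
    have hv : v ∈ Set.Icc 0 m := ⟨v.zero_le, hv⟩
    rwa [← Set.Ico_insert_right hm0.le, ← Set.Ioo_insert_left hm0] at hv
  refine ⟨Function.update (Function.update M 0 r₀) m rₘ, fun v hv => ?_,
    hM.pairwise_update hm0 hd ⟨rfl, by simp [r₀], by simp [r₀]⟩
      ⟨rfl, le_rfl, by simp [rₘ], by simp [rₘ]⟩ hr₀rₘ,
    fun v hv => ?_, fun v hv hv0 => ?_⟩ <;>
    rcases hcases v hv with rfl | rfl | hv
  · rw [hρₘ]; simp [rₘ, Rect.area]
  · rw [hρ₀]; simp only [r₀, Rect.area]; field_simp; ring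
  · rw [PocketLayout.update_of_mem_Ioo hv]; exact (hM.inPocket v hv).area_eq
  · rw [hρ₀, hρₘ]; simp [r₀, rₘ, hwidth.le]
  · exact le_rfl
  · rw [hρ₀, PocketLayout.update_of_mem_Ioo hv]
    simp only [r₀]; linarith [(hM.inPocket v hv).x_le_xlo]
  · exact le_rfl
  · exact absurd rfl hv0
  · rw [hρₘ, PocketLayout.update_of_mem_Ioo hv]
    simp only [rₘ]; linarith [(hM.inPocket v hv).sub_lt_ylo hd]

/-- Every maximal outerplanar graph with outer cycle `0,…,n-1`
and positive weights, and every pivot vertex `i`, admits a proportional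
rectangle-contact representation in which the rectangle of vertex `0` is leftmost,
the rectangle of vertex `n-1` is bottommost among the remaining ones, the top-right
corners of the rectangles of vertices `0,…,i` are exposed, and the bottom-right
corners of the rectangles of vertices `i,…,n-1` are exposed. -/
theorem double_staircase_layout_exists
    {n : ℕ} (hn : 3 ≤ n) (G : SimpleGraph (Fin n)) (hG : MaxOuterplanar n G)
    (w : Fin n → ℝ) (hw : ∀ v, 0 < w v) (i : Fin n) :
    ∃ ρ : Fin n → Rect,
      (∀ v, (ρ v).area = w v) ∧
      (∀ u v, u ≠ v → Disjoint (ρ u).interior (ρ v).interior) ∧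
      (∀ u v, u ≠ v → (G.Adj u v ↔ Rect.Contact (ρ u) (ρ v))) ∧
      (∀ v, (ρ ⟨0, by omega⟩).xlo ≤ (ρ v).xlo) ∧
      (∀ v, v ≠ ⟨0, by omega⟩ → (ρ ⟨n - 1, by omega⟩).ylo ≤ (ρ v).ylo) ∧
      (∀ v, v ≤ i → ∀ u, u ≠ v → ((ρ v).xhi, (ρ v).yhi) ∉ (ρ u).toSet) ∧
      (∀ v, i ≤ v → ∀ u, u ≠ v → ((ρ v).xhi, (ρ v).ylo) ∉ (ρ u).toSet) := by
  obtain ⟨ρ, harea, hcompat, hleft, hbottom⟩ :=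
    hG.isTriangulatedPolygon.exists_layout (w := fun k => if h : k < n then w ⟨k, h⟩ else 1)
      (fun k => by split <;> simp [hw]) (hG.map_adj_zero_last (by omega)) i
  have hpair (u v : Fin n) (huv : u ≠ v) :
      Compatible (G.map Fin.valEmbedding) i u (ρ u) v (ρ v) :=
    hcompat ⟨Nat.zero_le _, by omega⟩ ⟨Nat.zero_le _, by omega⟩ (Fin.val_injective.ne huv)
  refine ⟨fun v => ρ v, fun v => by simpa using harea v (by omega),
    fun u v huv => (hpair u v huv).disjoint,
    fun u v huv => SimpleGraph.map_adj_apply.symm.trans (hpair u v huv).contact_iff.symm,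
    fun v => hleft v (by omega), fun v hv => hbottom v (by omega) (fun h => hv (Fin.ext h)),
    fun v hv u huv => (hpair v u huv.symm).corners_left.1 hv,
    fun v hv u huv => (hpair v u huv.symm).corners_left.2 hv⟩
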